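/- arXiv:1611.06865 — 3 statements merged into one kernel-verified Lean document; each statement's English description precedes it below -/
import Mathlib

section
/- Let a > 3 be an integer and let S = {0} ∪ {exp(2πik/a) : k = 0,...,a−1} ⊂ ℂ ⊂ ℙ¹. If h is a Möbius transformation of the Riemann sphere mapping S bijectively onto S, then h(z) = exp(2πik/a)·z for some integer k. -/
open Polynomial

private lemma coeff_linear_pow_self (u v : ℂ) (m : ℕ) :
    ((C u * X + C v) ^ m).coeff m = u ^ m := by
  induction m with
  | zero => simp
  | succ k ih =>
    have hdeg : ((C u * X + C v) ^ k).natDegree < k + 1 := by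
      refine lt_of_le_of_lt (le_trans natDegree_pow_le ?_) (Nat.lt_succ_self k)
      calc k * (C u * X + C v).natDegree ≤ k * 1 := Nat.mul_le_mul_left k natDegree_linear_le
        _ = k := Nat.mul_one k
    rw [pow_succ, mul_add, coeff_add, ← mul_assoc, coeff_mul_X, coeff_mul_C, coeff_mul_C, ih,
      coeff_eq_zero_of_natDegree_lt hdeg, zero_mul, add_zero, ← pow_succ]

private lemma key_contra (n : ℕ) (c γ ζ w : ℂ) (hw : w ≠ 0) (hζ : ζ ≠ 0)
    (hζa : ζ ^ (n + 4) = 1)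
    (E1 : w ^ (n + 4) + c * (((n : ℂ) + 5) * ζ ^ (n + 4) - 1) = 0)
    (E2 : 2 * ((n : ℂ) + 4) * γ * w ^ (n + 3)
      + c * (((n : ℂ) + 5) * ((n : ℂ) + 4)) * ζ ^ (n + 3) = 0)
    (E3 : 3 * ((n : ℂ) + 4) * ((n : ℂ) + 3) * γ ^ 2 * w ^ (n + 2)
      + c * (((n : ℂ) + 5) * ((n : ℂ) + 4) * ((n : ℂ) + 3)) * ζ ^ (n + 2) = 0) : False := by
  have hn1 : ((n : ℂ) + 1) ≠ 0 := by
    have : ((n + 1 : ℕ) : ℂ) ≠ 0 := Nat.cast_ne_zero.mpr (by omega)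
    push_cast at this; exact this
  have hn3 : ((n : ℂ) + 3) ≠ 0 := by
    have : ((n + 3 : ℕ) : ℂ) ≠ 0 := Nat.cast_ne_zero.mpr (by omega)
    push_cast at this; exact this
  have hn4 : ((n : ℂ) + 4) ≠ 0 := by
    have : ((n + 4 : ℕ) : ℂ) ≠ 0 := Nat.cast_ne_zero.mpr (by omega)
    push_cast at this; exact this
  have hn5 : ((n : ℂ) + 5) ≠ 0 := by
    have : ((n + 5 : ℕ) : ℂ) ≠ 0 := Nat.cast_ne_zero.mpr (by omega)
    push_cast at this; exact this
  have E1' : w ^ (n + 4) = -c * ((n : ℂ) + 4) := by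
    linear_combination E1 - c * ((n : ℂ) + 5) * hζa
  have E2' : 2 * γ * w ^ (n + 3) = -c * ((n : ℂ) + 5) * ζ ^ (n + 3) := by
    apply mul_left_cancel₀ hn4
    linear_combination E2
  have E3' : 3 * γ ^ 2 * w ^ (n + 2) = -c * ((n : ℂ) + 5) * ζ ^ (n + 2) := by
    apply mul_left_cancel₀ (mul_ne_zero hn4 hn3)
    linear_combination E3
  have hc : c ≠ 0 := by
    intro h
    rw [h] at E1'
    simp only [neg_zero, zero_mul] at E1'
    exact hw (pow_eq_zero_iff (by omega) |>.mp E1')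
  have hγ : γ ≠ 0 := by
    intro h
    apply mul_ne_zero (mul_ne_zero hc hn5) (pow_ne_zero (n + 3) hζ)
    rw [h] at E2'
    linear_combination E2'
  have hA : ((n : ℂ) + 5) * w = 2 * ((n : ℂ) + 4) * γ * ζ := by
    apply mul_left_cancel₀ hc
    linear_combination (ζ * w) * E2' + (-(2 * γ * ζ)) * E1' + (-(c * ((n : ℂ) + 5) * w)) * hζa
  have hB : ((n : ℂ) + 5) * w ^ 2 = 3 * ((n : ℂ) + 4) * γ ^ 2 * ζ ^ 2 := by
    apply mul_left_cancel₀ hc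
    linear_combination (ζ ^ 2 * w ^ 2) * E3' + (-(3 * γ ^ 2 * ζ ^ 2)) * E1'
      + (-(c * ((n : ℂ) + 5) * w ^ 2)) * hζa
  have final : ((n : ℂ) + 1) * (((n : ℂ) + 4) * (γ ^ 2 * ζ ^ 2)) = 0 := by
    linear_combination (-(((n : ℂ) + 5) * w + 2 * ((n : ℂ) + 4) * γ * ζ)) * hA
      + ((n : ℂ) + 5) * hB
  exact mul_ne_zero hn1
    (mul_ne_zero hn4 (mul_ne_zero (pow_ne_zero 2 hγ) (pow_ne_zero 2 hζ))) final

private lemma eqs_from_poly (n : ℕ) (A γ δ ζ c : ℂ)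
    (hT : C A * (X - C ζ) ^ (n + 5) - (C γ * X + C δ) ^ (n + 4) * (X - C ζ)
      - C c * (X ^ (n + 5) - X) = 0) :
    ((γ * ζ + δ) ^ (n + 4) + c * (((n : ℂ) + 5) * ζ ^ (n + 4) - 1) = 0) ∧
    (2 * ((n : ℂ) + 4) * γ * (γ * ζ + δ) ^ (n + 3)
      + c * (((n : ℂ) + 5) * ((n : ℂ) + 4)) * ζ ^ (n + 3) = 0) ∧
    (3 * ((n : ℂ) + 4) * ((n : ℂ) + 3) * γ ^ 2 * (γ * ζ + δ) ^ (n + 2)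
      + c * (((n : ℂ) + 5) * ((n : ℂ) + 4) * ((n : ℂ) + 3)) * ζ ^ (n + 2) = 0) := by
  have h1 : derivative (C A * (X - C ζ) ^ (n + 5) - (C γ * X + C δ) ^ (n + 4) * (X - C ζ)
      - C c * (X ^ (n + 5) - X)) = 0 := by rw [hT]; simp
  have h2 : derivative (derivative (C A * (X - C ζ) ^ (n + 5)
      - (C γ * X + C δ) ^ (n + 4) * (X - C ζ) - C c * (X ^ (n + 5) - X))) = 0 := by
    rw [hT]; simp
  have h3 : derivative (derivative (derivative (C A * (X - C ζ) ^ (n + 5)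
      - (C γ * X + C δ) ^ (n + 4) * (X - C ζ) - C c * (X ^ (n + 5) - X)))) = 0 := by
    rw [hT]; simp
  have e1 := congrArg (eval ζ) h1
  have e2 := congrArg (eval ζ) h2
  have e3 := congrArg (eval ζ) h3
  simp only [derivative_sub, derivative_add, derivative_mul, derivative_pow, derivative_C,
    derivative_X, derivative_one, derivative_zero, eval_sub, eval_add, eval_mul, eval_pow,
    eval_C, eval_X, eval_natCast, eval_one, eval_zero, sub_self,
    show n + 5 - 1 = n + 4 from rfl, show n + 4 - 1 = n + 3 from rfl,
    show n + 3 - 1 = n + 2 from rfl, show n + 2 - 1 = n + 1 from rfl,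
    zero_pow (show n + 4 ≠ 0 by omega), zero_pow (show n + 3 ≠ 0 by omega),
    zero_pow (show n + 2 ≠ 0 by omega), zero_pow (show n + 1 ≠ 0 by omega),
    mul_zero, zero_mul, add_zero, zero_add, mul_one, one_mul, sub_zero, zero_sub,
    neg_zero] at e1 e2 e3
  push_cast at e1 e2 e3
  refine ⟨?_, ?_, ?_⟩
  · linear_combination -e1
  · linear_combination -e2
  · linear_combination -e3

set_option maxHeartbeats 1000000 in
/-- Let `a > 3` and `S = {0} ∪ {a-th roots of unity}`. Any Möbius
transformation `z ↦ (αz+β)/(γz+δ)` (with `αδ - βγ ≠ 0`, no pole on `S`) mapping `S`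
bijectively onto `S` is `z ↦ exp(2πik/a)·z` for some integer `k`. -/
theorem stmt0 (a : ℕ) (ha : 3 < a) (α β γ δ : ℂ) (hdet : α * δ - β * γ ≠ 0)
    (S : Set ℂ) (hS : S = {0} ∪ {z : ℂ | z ^ a = 1})
    (hden : ∀ z ∈ S, γ * z + δ ≠ 0)
    (hbij : Set.BijOn (fun z => (α * z + β) / (γ * z + δ)) S S) :
    ∃ k : ℤ, ∀ z : ℂ,
      (α * z + β) / (γ * z + δ) = Complex.exp (2 * Real.pi * Complex.I * k / a) * z := by
  obtain ⟨n, rfl⟩ : ∃ n, a = n + 4 := ⟨a - 4, by omega⟩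
  have hamem : ∀ z : ℂ, z ∈ S ↔ z = 0 ∨ z ^ (n + 4) = 1 := by
    intro z; rw [hS]; simp [Set.mem_union]
  have h0S : (0 : ℂ) ∈ S := (hamem 0).mpr (Or.inl rfl)
  have hδ : δ ≠ 0 := by simpa using hden 0 h0S
  have hprim := Complex.isPrimitiveRoot_exp (n + 4) (by omega : n + 4 ≠ 0)
  have hmemR : ∀ x : ℂ, x ∈ nthRootsFinset (n + 4) (1 : ℂ) ↔ x ^ (n + 4) = 1 := fun x =>
    mem_nthRootsFinset (by omega) 1
  have hcardR : (nthRootsFinset (n + 4) (1 : ℂ)).card = n + 4 := hprim.card_nthRootsFinset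
  -- Step 1 : β = 0
  have hβ : β = 0 := by
    by_contra hβne
    have hf0 : β / δ ∈ S := by simpa using hbij.mapsTo h0S
    have hf0ne : β / δ ≠ 0 := div_ne_zero hβne hδ
    have hβδ : β ^ (n + 4) = δ ^ (n + 4) := by
      have h1 : (β / δ) ^ (n + 4) = 1 := ((hamem _).mp hf0).resolve_left hf0ne
      rw [div_pow, div_eq_one_iff_eq (pow_ne_zero _ hδ)] at h1
      exact h1
    obtain ⟨ζ, hζS, hfζ⟩ := hbij.surjOn h0S
    have hfζ' : (α * ζ + β) / (γ * ζ + δ) = 0 := hfζ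
    have hζ0 : ζ ≠ 0 := by
      rintro rfl
      apply hf0ne
      simpa using hfζ'
    have hζa : ζ ^ (n + 4) = 1 := ((hamem ζ).mp hζS).resolve_left hζ0
    have hnum : α * ζ + β = 0 :=
      (div_eq_zero_iff.mp hfζ').resolve_right (hden ζ hζS)
    have hroots : ∀ z : ℂ, z ^ (n + 4) = 1 → z ≠ ζ →
        (α * z + β) ^ (n + 4) = (γ * z + δ) ^ (n + 4) := by
      intro z hz hne
      have hzS : z ∈ S := (hamem z).mpr (Or.inr hz)
      have hfz : (α * z + β) / (γ * z + δ) ∈ S := hbij.mapsTo hzS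
      have hfzne : (α * z + β) / (γ * z + δ) ≠ 0 := by
        intro h
        apply hne
        apply hbij.injOn hzS hζS
        show (α * z + β) / (γ * z + δ) = (α * ζ + β) / (γ * ζ + δ)
        rw [h, hfζ']
      have h1 : ((α * z + β) / (γ * z + δ)) ^ (n + 4) = 1 :=
        ((hamem _).mp hfz).resolve_left hfzne
      rw [div_pow, div_eq_one_iff_eq (pow_ne_zero _ (hden z hzS))] at h1
      exact h1
    -- the polynomial identity
    have hTzero : (C (α ^ (n + 4)) * (X - C ζ) ^ (n + 5)
        - (C γ * X + C δ) ^ (n + 4) * (X - C ζ)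
        - C (α ^ (n + 4) - γ ^ (n + 4)) * (X ^ (n + 5) - X)) = 0 := by
      apply eq_zero_of_natDegree_lt_card_of_eval_eq_zero' _
        (insert (0 : ℂ) (nthRootsFinset (n + 4) (1 : ℂ)))
      · intro s hs
        rcases Finset.mem_insert.mp hs with rfl | hsR
        · have h1 : α ^ (n + 4) * (0 - ζ) ^ (n + 4) = δ ^ (n + 4) := by
            rw [← mul_pow, show α * (0 - ζ) = α * 0 + β by linear_combination -hnum]
            rw [mul_zero, zero_add]
            exact hβδ
          have h6 : (0 - ζ) ^ (n + 5) = (0 - ζ) ^ (n + 4) * (0 - ζ) := pow_succ _ _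
          have h0p : (0 : ℂ) ^ (n + 5) = 0 := zero_pow (by omega)
          simp only [eval_sub, eval_mul, eval_pow, eval_add, eval_C, eval_X]
          linear_combination (0 - ζ) * h1 + α ^ (n + 4) * h6 + (-(α ^ (n + 4) - γ ^ (n + 4))) * h0p
        · have hs1 : s ^ (n + 4) = 1 := (hmemR s).mp hsR
          rcases eq_or_ne s ζ with rfl | hneζ
          · have h5 : s ^ (n + 5) = s := by rw [pow_succ, hs1, one_mul]
            simp only [eval_sub, eval_mul, eval_pow, eval_add, eval_C, eval_X]
            rw [sub_self, zero_pow (show n + 5 ≠ 0 by omega), h5]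
            ring
          · have h1 : α ^ (n + 4) * (s - ζ) ^ (n + 4) = (γ * s + δ) ^ (n + 4) := by
              rw [← mul_pow, show α * (s - ζ) = α * s + β by linear_combination -hnum]
              exact hroots s hs1 hneζ
            have h5 : s ^ (n + 5) = s := by rw [pow_succ, hs1, one_mul]
            have h6 : (s - ζ) ^ (n + 5) = (s - ζ) ^ (n + 4) * (s - ζ) := pow_succ _ _
            simp only [eval_sub, eval_mul, eval_pow, eval_add, eval_C, eval_X]
            linear_combination (s - ζ) * h1 + α ^ (n + 4) * h6 + (-(α ^ (n + 4) - γ ^ (n + 4))) * h5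
      · have hcard : (insert (0 : ℂ) (nthRootsFinset (n + 4) (1 : ℂ))).card = n + 5 := by
          rw [Finset.card_insert_of_notMem, hcardR]
          intro h0
          have := (hmemR 0).mp h0
          rw [zero_pow (show n + 4 ≠ 0 by omega)] at this
          exact zero_ne_one this
        rw [hcard]
        -- natDegree ≤ n + 4
        have hd1 : (C (α ^ (n + 4)) * (X - C ζ) ^ (n + 5)).natDegree ≤ n + 5 := by
          refine natDegree_mul_le.trans ?_
          have h1 : ((X - C ζ : ℂ[X]) ^ (n + 5)).natDegree ≤ n + 5 := by
            refine natDegree_pow_le.trans ?_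
            rw [natDegree_X_sub_C, mul_one]
          simp only [natDegree_C, zero_add]
          exact h1
        have hlin : ((C γ * X + C δ : ℂ[X]) ^ (n + 4)).natDegree ≤ n + 4 := by
          refine natDegree_pow_le.trans ?_
          calc (n + 4) * (C γ * X + C δ : ℂ[X]).natDegree ≤ (n + 4) * 1 :=
                Nat.mul_le_mul_left _ natDegree_linear_le
            _ = n + 4 := Nat.mul_one _
        have hd2 : ((C γ * X + C δ) ^ (n + 4) * (X - C ζ) : ℂ[X]).natDegree ≤ n + 5 := by
          refine natDegree_mul_le.trans ?_
          rw [natDegree_X_sub_C]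
          omega
        have hd3 : (C (α ^ (n + 4) - γ ^ (n + 4)) * (X ^ (n + 5) - X) : ℂ[X]).natDegree
            ≤ n + 5 := by
          refine natDegree_mul_le.trans ?_
          simp only [natDegree_C, zero_add]
          refine (natDegree_sub_le _ _).trans ?_
          simp [natDegree_X_pow, natDegree_X]
        have hdT : (C (α ^ (n + 4)) * (X - C ζ) ^ (n + 5)
            - (C γ * X + C δ) ^ (n + 4) * (X - C ζ)
            - C (α ^ (n + 4) - γ ^ (n + 4)) * (X ^ (n + 5) - X)).natDegree ≤ n + 5 := by
          refine (natDegree_sub_le _ _).trans ?_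
          refine max_le ((natDegree_sub_le _ _).trans (max_le hd1 hd2)) hd3
        -- top coefficient vanishes
        have c1 : ((X - C ζ : ℂ[X]) ^ (n + 5)).coeff (n + 5) = 1 := by
          have hnd : ((X - C ζ : ℂ[X]) ^ (n + 5)).natDegree = n + 5 := by
            rw [(monic_X_sub_C ζ).natDegree_pow, natDegree_X_sub_C, mul_one]
          have := ((monic_X_sub_C ζ).pow (n + 5)).coeff_natDegree
          rwa [hnd] at this
        have c2 : (((C γ * X + C δ) ^ (n + 4) * (X - C ζ)) : ℂ[X]).coeff (n + 5)
            = γ ^ (n + 4) := by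
          have cmul : ((C γ * X + C δ : ℂ[X]) ^ (n + 4) * X).coeff (n + 5)
              = ((C γ * X + C δ : ℂ[X]) ^ (n + 4)).coeff (n + 4) := coeff_mul_X _ (n + 4)
          rw [mul_sub, coeff_sub, cmul]
          rw [coeff_linear_pow_self, coeff_mul_C,
            coeff_eq_zero_of_natDegree_lt (lt_of_le_of_lt hlin (by omega)), zero_mul, sub_zero]
        have c3 : ((X ^ (n + 5) - X : ℂ[X])).coeff (n + 5) = 1 := by
          rw [coeff_sub, coeff_X_pow, if_pos rfl, coeff_X, if_neg (by omega), sub_zero]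
        have hcoeff : (C (α ^ (n + 4)) * (X - C ζ) ^ (n + 5)
            - (C γ * X + C δ) ^ (n + 4) * (X - C ζ)
            - C (α ^ (n + 4) - γ ^ (n + 4)) * (X ^ (n + 5) - X)).coeff (n + 5) = 0 := by
          rw [coeff_sub, coeff_sub, coeff_C_mul, coeff_C_mul, c1, c2, c3]
          ring
        have : (C (α ^ (n + 4)) * (X - C ζ) ^ (n + 5)
            - (C γ * X + C δ) ^ (n + 4) * (X - C ζ)
            - C (α ^ (n + 4) - γ ^ (n + 4)) * (X ^ (n + 5) - X)).natDegree ≤ n + 4 := by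
          rw [natDegree_le_iff_coeff_eq_zero]
          intro N hN
          rcases Nat.lt_or_ge (n + 5) N with h | h
          · exact coeff_eq_zero_of_natDegree_lt (lt_of_le_of_lt hdT h)
          · have : N = n + 5 := by omega
            rw [this]
            exact hcoeff
        omega
    obtain ⟨E1, E2, E3⟩ := eqs_from_poly n (α ^ (n + 4)) γ δ ζ (α ^ (n + 4) - γ ^ (n + 4)) hTzero
    exact key_contra n (α ^ (n + 4) - γ ^ (n + 4)) γ ζ (γ * ζ + δ)
      (hden ζ hζS) hζ0 hζa E1 E2 E3
  -- Step 2 : roots of unity go to roots of unity, and γ = 0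
  have hroots2 : ∀ z : ℂ, z ^ (n + 4) = 1 → (γ * z + δ) ^ (n + 4) = α ^ (n + 4) := by
    intro z hz
    have hzS : z ∈ S := (hamem z).mpr (Or.inr hz)
    have hfz : (α * z + β) / (γ * z + δ) ∈ S := hbij.mapsTo hzS
    have hz0 : z ≠ 0 := by
      rintro rfl
      rw [zero_pow (show n + 4 ≠ 0 by omega)] at hz
      exact zero_ne_one hz
    have hfzne : (α * z + β) / (γ * z + δ) ≠ 0 := by
      intro h
      apply hz0
      apply hbij.injOn hzS h0S
      show (α * z + β) / (γ * z + δ) = (α * 0 + β) / (γ * 0 + δ)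
      rw [h, hβ]
      simp
    have h1 : ((α * z + β) / (γ * z + δ)) ^ (n + 4) = 1 :=
      ((hamem _).mp hfz).resolve_left hfzne
    rw [div_pow, div_eq_one_iff_eq (pow_ne_zero _ (hden z hzS))] at h1
    rw [hβ, add_zero, mul_pow, hz, mul_one] at h1
    exact h1.symm
  have hγ : γ = 0 := by
    by_contra hγne
    have hQ : ((C γ * X + C δ) ^ (n + 4) - C (α ^ (n + 4))
        - C (γ ^ (n + 4)) * (X ^ (n + 4) - 1) : ℂ[X]) = 0 := by
      apply eq_zero_of_natDegree_lt_card_of_eval_eq_zero' _ (nthRootsFinset (n + 4) (1 : ℂ))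
      · intro s hs
        have hs1 := (hmemR s).mp hs
        simp only [eval_sub, eval_mul, eval_add, eval_pow, eval_C, eval_X, eval_one]
        rw [hs1, hroots2 s hs1]
        ring
      · rw [hcardR]
        have hlin : ((C γ * X + C δ : ℂ[X]) ^ (n + 4)).natDegree ≤ n + 4 := by
          refine natDegree_pow_le.trans ?_
          calc (n + 4) * (C γ * X + C δ : ℂ[X]).natDegree ≤ (n + 4) * 1 :=
                Nat.mul_le_mul_left _ natDegree_linear_le
            _ = n + 4 := Nat.mul_one _
        have hdQ : ((C γ * X + C δ) ^ (n + 4) - C (α ^ (n + 4))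
            - C (γ ^ (n + 4)) * (X ^ (n + 4) - 1) : ℂ[X]).natDegree ≤ n + 4 := by
          refine (natDegree_sub_le _ _).trans (max_le ((natDegree_sub_le _ _).trans
            (max_le hlin (by simp))) ?_)
          refine natDegree_mul_le.trans ?_
          simp only [natDegree_C, zero_add]
          exact (natDegree_sub_le _ _).trans (by simp [natDegree_X_pow])
        have hcoeff : ((C γ * X + C δ) ^ (n + 4) - C (α ^ (n + 4))
            - C (γ ^ (n + 4)) * (X ^ (n + 4) - 1) : ℂ[X]).coeff (n + 4) = 0 := by
          rw [coeff_sub, coeff_sub, coeff_linear_pow_self, coeff_C_mul, coeff_sub,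
            coeff_X_pow, if_pos rfl, coeff_C, if_neg (by omega), coeff_one, if_neg (by omega)]
          ring
        have hlt : ((C γ * X + C δ) ^ (n + 4) - C (α ^ (n + 4))
            - C (γ ^ (n + 4)) * (X ^ (n + 4) - 1) : ℂ[X]).natDegree ≤ n + 3 := by
          rw [natDegree_le_iff_coeff_eq_zero]
          intro N hN
          rcases Nat.lt_or_ge (n + 4) N with h | h
          · exact coeff_eq_zero_of_natDegree_lt (lt_of_le_of_lt hdQ h)
          · have : N = n + 4 := by omega
            rw [this]
            exact hcoeff
        omega
    have h1 : derivative ((C γ * X + C δ) ^ (n + 4) - C (α ^ (n + 4))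
        - C (γ ^ (n + 4)) * (X ^ (n + 4) - 1) : ℂ[X]) = 0 := by
      rw [hQ]; simp
    have e := congrArg (eval 0) h1
    simp only [derivative_sub, derivative_add, derivative_mul, derivative_pow, derivative_C,
      derivative_X, derivative_one, zero_mul, mul_zero, zero_add, add_zero, mul_one, sub_zero,
      zero_sub, eval_sub, eval_mul, eval_add, eval_pow, eval_C, eval_X, eval_natCast, eval_zero,
      eval_one, eval_neg, show n + 4 - 1 = n + 3 from rfl,
      zero_pow (show n + 3 ≠ 0 by omega)] at e
    push_cast at e
    have hne : ((n : ℂ) + 4) * δ ^ (n + 3) * γ ≠ 0 := by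
      refine mul_ne_zero (mul_ne_zero ?_ (pow_ne_zero _ hδ)) hγne
      have : ((n + 4 : ℕ) : ℂ) ≠ 0 := Nat.cast_ne_zero.mpr (by omega)
      push_cast at this; exact this
    apply hne
    linear_combination e
  have hδα : δ ^ (n + 4) = α ^ (n + 4) := by
    have := hroots2 1 (one_pow _)
    rw [hγ] at this
    simpa using this
  -- conclusion
  haveI : NeZero (n + 4) := ⟨by omega⟩
  have hlam : (α / δ) ^ (n + 4) = 1 := by
    rw [div_pow, ← hδα, div_self (pow_ne_zero _ hδ)]
  obtain ⟨i, hi, hpow⟩ := hprim.eq_pow_of_pow_eq_one hlam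
  refine ⟨(i : ℤ), fun z => ?_⟩
  have hexp : Complex.exp (2 * Real.pi * Complex.I * (i : ℂ) / ((n : ℂ) + 4))
      = α / δ := by
    rw [← hpow, ← Complex.exp_nat_mul]
    congr 1
    push_cast
    ring
  rw [hβ, hγ, add_zero, zero_mul, zero_add]
  push_cast
  rw [hexp]
  ring
end

section
/- For a = 3, the Möbius transformation h(z) = −(z − j)/(2jz + j²), where j = exp(2πi/3), maps the set S = {0, 1, j, j²} bijectively onto itself but is not of the form z ↦ ωz for any root of unity ω. -/
/-- For `a = 3`, with `j = exp(2πi/3)`, the Möbius transformation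
`h(z) = -(z - j)/(2jz + j²)` maps `S = {0, 1, j, j²}` bijectively onto itself but is not
`z ↦ ωz` for any root of unity `ω`. -/
theorem stmt2 :
    let j : ℂ := Complex.exp (2 * Real.pi * Complex.I / 3)
    let h : ℂ → ℂ := fun z => -(z - j) / (2 * j * z + j ^ 2)
    let S : Set ℂ := {0, 1, j, j ^ 2}
    Set.BijOn h S S ∧
      ¬∃ ω : ℂ, (∃ n : ℕ, n ≠ 0 ∧ ω ^ n = 1) ∧
        ∀ z : ℂ, 2 * j * z + j ^ 2 ≠ 0 → h z = ω * z := by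
  intro j h S
  have hj0 : j ≠ 0 := Complex.exp_ne_zero _
  have hj3 : j ^ 3 = 1 := by
    show Complex.exp _ ^ 3 = 1
    rw [← Complex.exp_nat_mul]
    rw [show (3:ℕ) * (2*(Real.pi:ℂ)*Complex.I/3) = 2*Real.pi*Complex.I by push_cast; ring]
    exact Complex.exp_two_pi_mul_I
  have hj1 : j ≠ 1 := by
    show Complex.exp _ ≠ 1
    intro hEq
    rw [Complex.exp_eq_one_iff] at hEq
    obtain ⟨n, hn⟩ := hEq
    have hpi : (Real.pi : ℂ) ≠ 0 := by exact_mod_cast Real.pi_ne_zero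
    have h2 : (2:ℂ) * Real.pi * Complex.I ≠ 0 := by
      simp [hpi, Complex.I_ne_zero]
    field_simp at hn
    have h0 : ((1:ℂ) - n*3) * (2*Real.pi*Complex.I) = 0 := by linear_combination (2*Real.pi*Complex.I) * hn
    rcases mul_eq_zero.1 h0 with hc | hc
    · have h3 : (1:ℂ) = n * 3 := by linear_combination hc
      have : (1:ℤ) = n * 3 := by exact_mod_cast h3
      omega
    · exact h2 hc
  have hsum : 1 + j + j ^ 2 = 0 := by
    have hfac : (j - 1) * (j ^ 2 + j + 1) = 0 := by linear_combination hj3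
    rcases mul_eq_zero.1 hfac with hc | hc
    · exact absurd (by linear_combination hc) hj1
    · linear_combination hc
  have hj20 : j ^ 2 ≠ 0 := pow_ne_zero _ hj0
  have hj21 : j ^ 2 ≠ 1 := by
    intro hEq
    exact hj1 (by linear_combination hj3 - j * hEq)
  have hjj2 : j ≠ j ^ 2 := by
    intro hEq
    exact hj21 (by linear_combination j * hEq + hj3)
  have hd1 : 2 * j * 1 + j ^ 2 ≠ 0 := by
    intro hEq
    exact hj1 (by linear_combination hEq - hsum)
  have hdj : 2 * j * j + j ^ 2 ≠ 0 := by
    intro hEq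
    have h3 : (3:ℂ) = 0 := by linear_combination j * hEq - 3 * hj3
    norm_num at h3
  have hdj2 : 2 * j * j ^ 2 + j ^ 2 ≠ 0 := by
    intro hEq
    exact hj1 (by linear_combination -hEq + hsum + 2 * hj3)
  have hd0 : 2 * j * 0 + j ^ 2 ≠ 0 := by simpa using hj20
  have e0 : h 0 = j ^ 2 := by
    show -(0 - j) / (2 * j * 0 + j ^ 2) = j ^ 2
    rw [div_eq_iff hd0]
    linear_combination (-j) * hj3
  have e1 : h 1 = 1 := by
    show -(1 - j) / (2 * j * 1 + j ^ 2) = 1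
    rw [div_eq_iff hd1]
    linear_combination -hsum
  have ej : h j = 0 := by
    show -(j - j) / (2 * j * j + j ^ 2) = 0
    simp
  have ej2 : h (j ^ 2) = j := by
    show -(j ^ 2 - j) / (2 * j * j ^ 2 + j ^ 2) = j
    rw [div_eq_iff hdj2]
    linear_combination (-2*j-1) * hj3 - hsum
  constructor
  · refine ⟨?_, ?_, ?_⟩
    · rintro x hx
      simp only [S, Set.mem_insert_iff, Set.mem_singleton_iff] at hx ⊢
      rcases hx with rfl | rfl | rfl | rfl
      · rw [e0]; tauto
      · rw [e1]; tauto
      · rw [ej]; tauto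
      · rw [ej2]; tauto
    · rintro x hx y hy hxy
      simp only [S, Set.mem_insert_iff, Set.mem_singleton_iff] at hx hy
      rcases hx with rfl | rfl | rfl | rfl <;> rcases hy with rfl | rfl | rfl | rfl <;>
        simp_all [e0, e1, ej, ej2]
    · rintro y hy
      simp only [S, Set.mem_insert_iff, Set.mem_singleton_iff] at hy
      rcases hy with rfl | rfl | rfl | rfl
      · exact ⟨j, by simp [S], ej⟩
      · exact ⟨1, by simp [S], e1⟩
      · exact ⟨j ^ 2, by simp [S], ej2⟩
      · exact ⟨0, by simp [S], e0⟩
  · rintro ⟨ω, -, hω⟩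
    have h0 := hω 0 hd0
    rw [e0, mul_zero] at h0
    exact hj20 h0
end

section
/- Let r = exp(2πi/a) with a > 3 an integer. The map k ↦ (z ↦ r^k z) induces a group isomorphism from ℤ/aℤ onto the group of Möbius transformations of ℙ¹ preserving the set {0} ∪ {a-th roots of unity}. -/
open Complex in
private lemma stmt19_conj_aux {a : ℕ} (ha : a ≠ 0) {w : ℂ} (hw : w ^ a = 1) :
    w * (starRingEnd ℂ) w = 1 := by
  have h1 : Complex.normSq w ^ a = 1 := by
    rw [← map_pow, hw, map_one]
  have h2 : Complex.normSq w = 1 := by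
    have h0 : 0 ≤ Complex.normSq w := Complex.normSq_nonneg w
    have := (pow_left_inj₀ h0 (zero_le_one) ha).mp (by rw [h1, one_pow])
    exact this
  rw [Complex.mul_conj, h2, Complex.ofReal_one]

private lemma stmt19_quad_aux {A B C x y z : ℂ} (hxy : x ≠ y) (hxz : x ≠ z) (hyz : y ≠ z)
    (hx : A * x ^ 2 + B * x + C = 0) (hy : A * y ^ 2 + B * y + C = 0)
    (hz : A * z ^ 2 + B * z + C = 0) : A = 0 ∧ B = 0 ∧ C = 0 := by
  have h1 : (x - y) * (A * (x + y) + B) = 0 := by linear_combination hx - hy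
  have h2 : (x - z) * (A * (x + z) + B) = 0 := by linear_combination hx - hz
  have h1' : A * (x + y) + B = 0 := (mul_eq_zero.mp h1).resolve_left (sub_ne_zero.mpr hxy)
  have h2' : A * (x + z) + B = 0 := (mul_eq_zero.mp h2).resolve_left (sub_ne_zero.mpr hxz)
  have h3 : (y - z) * A = 0 := by linear_combination h1' - h2'
  have hA : A = 0 := (mul_eq_zero.mp h3).resolve_left (sub_ne_zero.mpr hyz)
  have hB : B = 0 := by linear_combination h1' - (x + y) * hA
  have hC : C = 0 := by linear_combination hx - x ^ 2 * hA - x * hB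
  exact ⟨hA, hB, hC⟩

/-- For `a > 3` and `r = exp(2πi/a)`, the map `k ↦ (z ↦ r^k z)` is a
group isomorphism from `ℤ/aℤ` onto the group of Möbius transformations of `ℙ¹`
preserving `S = {0} ∪ {a-th roots of unity}`: each rotation preserves `S`, the map is
injective and multiplicative, and every Möbius transformation preserving `S` is such a
rotation. -/
theorem stmt19 (a : ℕ) (ha : 3 < a) :
    let r : ℂ := Complex.exp (2 * Real.pi * Complex.I / a)
    let S : Set ℂ := {0} ∪ {z : ℂ | z ^ a = 1}
    (∀ k : ZMod a, Set.BijOn (fun z : ℂ => r ^ k.val * z) S S) ∧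
      (∀ k k' : ZMod a,
        (fun z : ℂ => r ^ k.val * z) = (fun z : ℂ => r ^ k'.val * z) → k = k') ∧
      (∀ k k' : ZMod a, ∀ z : ℂ, r ^ (k + k').val * z = r ^ k.val * (r ^ k'.val * z)) ∧
      ∀ α β γ δ : ℂ, α * δ - β * γ ≠ 0 → (∀ z ∈ S, γ * z + δ ≠ 0) →
        Set.BijOn (fun z => (α * z + β) / (γ * z + δ)) S S →
        ∃ k : ZMod a, ∀ z : ℂ, (α * z + β) / (γ * z + δ) = r ^ k.val * z := by
  intro r S
  haveI : NeZero a := ⟨by omega⟩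
  have ha0 : a ≠ 0 := by omega
  have hprim : IsPrimitiveRoot r a := Complex.isPrimitiveRoot_exp a ha0
  have hr1 : r ^ a = 1 := hprim.pow_eq_one
  have hSmem : ∀ z : ℂ, z ∈ S ↔ z = 0 ∨ z ^ a = 1 := fun z => by
    simp [S, Set.mem_union, Set.mem_setOf_eq]
  have hpow_ne : ∀ c : ℂ, c ^ a = 1 → c ≠ 0 := by
    intro c hc h0
    rw [h0, zero_pow ha0] at hc
    exact zero_ne_one hc
  refine ⟨?_, ?_, ?_, ?_⟩
  · -- each rotation preserves S
    intro k
    set c : ℂ := r ^ k.val with hc_def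
    have hc : c ^ a = 1 := by rw [hc_def, ← pow_mul, mul_comm, pow_mul, hr1, one_pow]
    have hc0 : c ≠ 0 := hpow_ne c hc
    refine ⟨?_, ?_, ?_⟩
    · intro z hz
      rw [hSmem] at hz ⊢
      rcases hz with h | h
      · exact Or.inl (by simp [h])
      · exact Or.inr (by rw [mul_pow, hc, h, mul_one])
    · intro x _ y _ h
      exact mul_left_cancel₀ hc0 h
    · intro w hw
      refine ⟨c⁻¹ * w, ?_, ?_⟩
      · rw [hSmem] at hw ⊢
        rcases hw with h | h
        · exact Or.inl (by simp [h])
        · refine Or.inr ?_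
          rw [mul_pow, inv_pow, hc, h, inv_one, one_mul]
      · show c * (c⁻¹ * w) = w
        field_simp
  · -- injectivity
    intro k k' h
    have h1 : r ^ k.val * 1 = r ^ k'.val * 1 := congrFun h 1
    rw [mul_one, mul_one] at h1
    exact ZMod.val_injective a (hprim.pow_inj (ZMod.val_lt k) (ZMod.val_lt k') h1)
  · -- multiplicativity
    intro k k' z
    have key : ∀ x : ℕ, r ^ x = r ^ (x % a) := by
      intro x
      conv_lhs => rw [← Nat.div_add_mod x a, pow_add, pow_mul, hr1, one_pow, one_mul]
    rw [ZMod.val_add, ← key, pow_add, mul_assoc]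
  · -- classification of Möbius transformations preserving S
    intro α β γ δ hdet hden hbij
    have h0S : (0 : ℂ) ∈ S := (hSmem 0).mpr (Or.inl rfl)
    have hδ : δ ≠ 0 := by
      have := hden 0 h0S
      simpa using this
    set cj : ℂ →+* ℂ := (starRingEnd ℂ) with hcj_def
    -- key identity
    have key : ∀ ω : ℂ, ω ^ a = 1 → (α * ω + β) / (γ * ω + δ) ≠ 0 →
        (α * cj β - γ * cj δ) * ω ^ 2 +
          (α * cj α + β * cj β - γ * cj γ - δ * cj δ) * ω +
          (β * cj α - δ * cj γ) = 0 := by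
      intro ω hω hfω
      have hωS : ω ∈ S := (hSmem ω).mpr (Or.inr hω)
      have hv : γ * ω + δ ≠ 0 := hden ω hωS
      have hwS : (α * ω + β) / (γ * ω + δ) ∈ S := hbij.mapsTo hωS
      have hw : ((α * ω + β) / (γ * ω + δ)) ^ a = 1 :=
        ((hSmem _).mp hwS).resolve_left hfω
      have hww : ((α * ω + β) / (γ * ω + δ)) * cj ((α * ω + β) / (γ * ω + δ)) = 1 :=
        stmt19_conj_aux ha0 hw
      have hωω : ω * cj ω = 1 := stmt19_conj_aux ha0 hω
      have hwv : ((α * ω + β) / (γ * ω + δ)) * (γ * ω + δ) = α * ω + β :=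
        div_mul_cancel₀ _ hv
      have E : (α * ω + β) * cj (α * ω + β) = (γ * ω + δ) * cj (γ * ω + δ) := by
        rw [← hwv, map_mul]
        linear_combination ((γ * ω + δ) * cj (γ * ω + δ)) * hww
      have E' : (α * ω + β) * (cj α * cj ω + cj β) = (γ * ω + δ) * (cj γ * cj ω + cj δ) := by
        simpa only [map_add, map_mul] using E
      linear_combination ω * E' -
        (α * cj α * ω + β * cj α - γ * cj γ * ω - δ * cj γ) * hωω
    -- three distinct roots of unity on which f is nonzero
    have hmemS : ∀ i : ℕ, r ^ i ∈ S := by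
      intro i
      rw [hSmem]
      exact Or.inr (by rw [← pow_mul, mul_comm, pow_mul, hr1, one_pow])
    have huniq : ∀ i j : ℕ, i < a → j < a →
        (α * r ^ i + β) / (γ * r ^ i + δ) = 0 →
        (α * r ^ j + β) / (γ * r ^ j + δ) = 0 → i = j := by
      intro i j hi hj h1 h2
      exact hprim.pow_inj hi hj (hbij.injOn (hmemS i) (hmemS j) (h1.trans h2.symm))
    have hne : ∀ i j : ℕ, i < a → j < a → i ≠ j →
        (α * r ^ j + β) / (γ * r ^ j + δ) = 0 →
        (α * r ^ i + β) / (γ * r ^ i + δ) ≠ 0 := by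
      intro i j hi hj hij h0 h
      exact hij (huniq i j hi hj h h0)
    have hsel : ∃ i j k : ℕ, i < a ∧ j < a ∧ k < a ∧ i ≠ j ∧ i ≠ k ∧ j ≠ k ∧
        (α * r ^ i + β) / (γ * r ^ i + δ) ≠ 0 ∧
        (α * r ^ j + β) / (γ * r ^ j + δ) ≠ 0 ∧
        (α * r ^ k + β) / (γ * r ^ k + δ) ≠ 0 := by
      by_cases h0 : (α * r ^ 0 + β) / (γ * r ^ 0 + δ) = 0
      · exact ⟨1, 2, 3, by omega, by omega, by omega, by omega, by omega, by omega,
          hne 1 0 (by omega) (by omega) (by omega) h0,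
          hne 2 0 (by omega) (by omega) (by omega) h0,
          hne 3 0 (by omega) (by omega) (by omega) h0⟩
      by_cases h1 : (α * r ^ 1 + β) / (γ * r ^ 1 + δ) = 0
      · exact ⟨0, 2, 3, by omega, by omega, by omega, by omega, by omega, by omega,
          hne 0 1 (by omega) (by omega) (by omega) h1,
          hne 2 1 (by omega) (by omega) (by omega) h1,
          hne 3 1 (by omega) (by omega) (by omega) h1⟩
      by_cases h2 : (α * r ^ 2 + β) / (γ * r ^ 2 + δ) = 0
      · exact ⟨0, 1, 3, by omega, by omega, by omega, by omega, by omega, by omega,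
          hne 0 2 (by omega) (by omega) (by omega) h2,
          hne 1 2 (by omega) (by omega) (by omega) h2,
          hne 3 2 (by omega) (by omega) (by omega) h2⟩
      · exact ⟨0, 1, 2, by omega, by omega, by omega, by omega, by omega, by omega,
          h0, h1, h2⟩
    obtain ⟨i, j, k, hi, hj, hk, hij, hik, hjk, hfi, hfj, hfk⟩ := hsel
    have hrpow : ∀ m : ℕ, (r ^ m) ^ a = 1 := by
      intro m
      rw [← pow_mul, mul_comm, pow_mul, hr1, one_pow]
    have hxy : r ^ i ≠ r ^ j := fun h => hij (hprim.pow_inj hi hj h)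
    have hxz : r ^ i ≠ r ^ k := fun h => hik (hprim.pow_inj hi hk h)
    have hyz : r ^ j ≠ r ^ k := fun h => hjk (hprim.pow_inj hj hk h)
    obtain ⟨hA, hB, hC⟩ := stmt19_quad_aux hxy hxz hyz
      (key (r ^ i) (hrpow i) hfi) (key (r ^ j) (hrpow j) hfj) (key (r ^ k) (hrpow k) hfk)
    -- now finish with algebra
    by_cases hβ : β = 0
    · -- then γ = 0 and f(z) = (α/δ) z
      have hγ : γ = 0 := by
        rw [hβ] at hC
        have : δ * cj γ = 0 := by linear_combination -hC
        have hcjγ : cj γ = 0 := by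
          rcases mul_eq_zero.mp this with h | h
          · exact absurd h hδ
          · exact h
        have := congrArg cj hcjγ
        simpa [hcj_def, Complex.conj_conj] using this
      have hα : α ≠ 0 := by
        intro h
        apply hdet
        rw [h, hβ]; ring
      -- f 1 = α/δ ∈ S and nonzero
      have h1S : (1 : ℂ) ∈ S := (hSmem 1).mpr (Or.inr (one_pow a))
      have hfS : (α * 1 + β) / (γ * 1 + δ) ∈ S := hbij.mapsTo h1S
      have hcval : (α * 1 + β) / (γ * 1 + δ) = α / δ := by rw [hβ, hγ]; ring_nf
      have hcS : α / δ ∈ S := hcval ▸ hfS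
      have hc0 : α / δ ≠ 0 := div_ne_zero hα hδ
      have hca : (α / δ) ^ a = 1 := ((hSmem _).mp hcS).resolve_left hc0
      obtain ⟨m, hm, hrm⟩ := hprim.eq_pow_of_pow_eq_one hca
      refine ⟨(m : ZMod a), ?_⟩
      intro z
      have hval : ((m : ZMod a)).val = m := ZMod.val_cast_of_lt hm
      rw [hval, hrm, hβ, hγ]
      field_simp
      rw [add_zero, mul_zero, zero_add, mul_div_cancel_right₀ _ hδ]
    · -- β ≠ 0 leads to contradiction with the determinant
      exfalso
      have hf0 : (α * 0 + β) / (γ * 0 + δ) = β / δ := by ring_nf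
      have hf0S : β / δ ∈ S := by
        have := hbij.mapsTo h0S
        rwa [hf0] at this
      have hf00 : β / δ ≠ 0 := div_ne_zero hβ hδ
      have hf0a : (β / δ) ^ a = 1 := ((hSmem _).mp hf0S).resolve_left hf00
      have hββ : (β / δ) * cj (β / δ) = 1 := stmt19_conj_aux ha0 hf0a
      have hβδ : β * cj β = δ * cj δ := by
        have hcjδ : cj δ ≠ 0 := fun h => hδ (by simpa [hcj_def, map_eq_zero] using h)
        rw [map_div₀] at hββ
        field_simp [hcj_def] at hββ
        linear_combination hββ
      have hcjβ : cj β ≠ 0 := fun h => hβ (by simpa [hcj_def, map_eq_zero] using h)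
      have hcjδ : cj δ ≠ 0 := fun h => hδ (by simpa [hcj_def, map_eq_zero] using h)
      have : cj β * cj δ * (α * δ - β * γ) = 0 := by
        linear_combination (δ * cj δ) * hA - (γ * cj δ) * hβδ
      exact hdet (by
        rcases mul_eq_zero.mp this with h | h
        · rcases mul_eq_zero.mp h with h' | h'
          · exact absurd h' hcjβ
          · exact absurd h' hcjδ
        · exact h)
end
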